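/- Let L be a bounded distributive lattice and f₁, f₂ : Lⁿ → L nondecreasing compatible functions. If f₁(b) = f₂(b) for all b ∈ {0,1}ⁿ, then f₁ = f₂. -/
import Mathlib


variable {L : Type*}

def IsLatCong [Lattice L] (Θ : L → L → Prop) : Prop :=
  Equivalence Θ ∧ (∀ a b c d, Θ a b → Θ c d → Θ (a ⊔ c) (b ⊔ d)) ∧
    (∀ a b c d, Θ a b → Θ c d → Θ (a ⊓ c) (b ⊓ d))

def IsCompat [Lattice L] {n : ℕ} (f : (Fin n → L) → L) : Prop :=
  ∀ Θ : L → L → Prop, IsLatCong Θ →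
    ∀ x y : Fin n → L, (∀ i, Θ (x i) (y i)) → Θ (f x) (f y)

def IsCompat1 [Lattice L] (f : L → L) : Prop :=
  ∀ Θ : L → L → Prop, IsLatCong Θ → ∀ x y : L, Θ x y → Θ (f x) (f y)

def med [Lattice L] (a b c : L) : L := (a ⊔ b) ⊓ (b ⊔ c) ⊓ (c ⊔ a)

lemma infCong [DistribLattice L] (a : L) :
    IsLatCong (fun u v : L => u ⊓ a = v ⊓ a) := by
  refine ⟨⟨fun _ => rfl, fun h => h.symm, fun h h' => h.trans h'⟩, ?_, ?_⟩
  · intro b c d e h h'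
    simp only [inf_sup_right, h, h']
  · intro b c d e h h'
    calc b ⊓ d ⊓ a = (b ⊓ a) ⊓ (d ⊓ a) := by ac_rfl
    _ = (c ⊓ a) ⊓ (e ⊓ a) := by rw [h, h']
    _ = c ⊓ e ⊓ a := by ac_rfl

lemma supCong [DistribLattice L] (a : L) :
    IsLatCong (fun u v : L => u ⊔ a = v ⊔ a) := by
  refine ⟨⟨fun _ => rfl, fun h => h.symm, fun h h' => h.trans h'⟩, ?_, ?_⟩
  · intro b c d e h h'
    calc b ⊔ d ⊔ a = (b ⊔ a) ⊔ (d ⊔ a) := by ac_rfl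
    _ = (c ⊔ a) ⊔ (e ⊔ a) := by rw [h, h']
    _ = c ⊔ e ⊔ a := by ac_rfl
  · intro b c d e h h'
    simp only [sup_inf_right, h, h']

theorem stmt9 [DistribLattice L] [BoundedOrder L] {n : ℕ}
    (f₁ f₂ : (Fin n → L) → L)
    (h₁m : Monotone f₁) (h₂m : Monotone f₂)
    (h₁c : IsCompat f₁) (h₂c : IsCompat f₂)
    (hb : ∀ b : Fin n → L, (∀ i, b i = ⊥ ∨ b i = ⊤) → f₁ b = f₂ b) :
    f₁ = f₂ := by
  have key : ∀ k : ℕ, ∀ x : Fin n → L,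
      (∀ i : Fin n, k ≤ (i : ℕ) → x i = ⊥ ∨ x i = ⊤) → f₁ x = f₂ x := by
    intro k
    induction k with
    | zero => intro x hx; exact hb x (fun i => hx i (Nat.zero_le _))
    | succ k ih =>
      intro x hx
      by_cases hk : k < n
      · set j : Fin n := ⟨k, hk⟩
        set a : L := x j
        set xt := Function.update x j (⊤ : L) with hxt
        set xb := Function.update x j (⊥ : L) with hxb
        have hcond : ∀ (c : L), ∀ i : Fin n, k ≤ (i : ℕ) →
            Function.update x j c i = c ∨ x i = ⊥ ∨ x i = ⊤ := by
          intro c i hi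
          by_cases hij : i = j
          · left; rw [hij, Function.update_self]
          · right
            exact hx i (lt_of_le_of_ne hi (fun h => hij (Fin.ext h.symm)))
        have ht : f₁ xt = f₂ xt := by
          apply ih
          intro i hi
          rcases hcond ⊤ i hi with h | h
          · right; exact h
          · rw [hxt, Function.update_apply]
            split
            · right; rfl
            · exact h
        have hbt : f₁ xb = f₂ xb := by
          apply ih
          intro i hi
          rcases hcond ⊥ i hi with h | h
          · left; exact h
          · rw [hxb, Function.update_apply]
            split
            · left; rfl
            · exact h
        have rel_t : ∀ i, x i ⊓ a = xt i ⊓ a := by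
          intro i
          rw [hxt, Function.update_apply]
          split
          · rename_i h; rw [h, top_inf_eq]; exact inf_idem a
          · rfl
        have rel_b : ∀ i, x i ⊔ a = xb i ⊔ a := by
          intro i
          rw [hxb, Function.update_apply]
          split
          · rename_i h; rw [h, bot_sup_eq]; exact sup_idem a
          · rfl
        have e1 : f₁ x ⊓ a = f₁ xt ⊓ a := h₁c _ (infCong a) x xt rel_t
        have e2 : f₂ x ⊓ a = f₂ xt ⊓ a := h₂c _ (infCong a) x xt rel_t
        have e3 : f₁ x ⊔ a = f₁ xb ⊔ a := h₁c _ (supCong a) x xb rel_b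
        have e4 : f₂ x ⊔ a = f₂ xb ⊔ a := h₂c _ (supCong a) x xb rel_b
        exact eq_of_inf_eq_sup_eq (by rw [e1, ht, ← e2]) (by rw [e3, hbt, ← e4])
      · exact ih x (fun i hi => absurd (lt_of_le_of_lt hi i.isLt) (by omega))
  funext x
  exact key n x (fun i hi => absurd (lt_of_le_of_lt hi i.isLt) (by omega))
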